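/- Suppose h : ℝ → ℝ is differentiable with (H₀/δ₁)·exp(-ξ²/(4δ₂)) ≤ h'(ξ) ≤ (H₀/δ₂)·exp(-ξ²/(4δ₁)) for all ξ ∈ ℝ, where H₀ < 0 and 0 < δ₁ ≤ δ₂, and h(0) = h₀. Then the limits h(±∞) exist and satisfy h₀ + (H₀/δ₁)√(πδ₂) ≤ h(+∞) ≤ h₀ + (H₀/δ₂)√(πδ₁) and h₀ − (H₀/δ₂)√(πδ₁) ≤ h(−∞) ≤ h₀ − (H₀/δ₁)√(πδ₂). -/

import Mathlib

/-!
Being squeezed between two Gaussians, `h'` is integrable on `ℝ`, so by the fundamental theorem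
of calculus `h(+∞) = h₀ + ∫_{(0,∞)} h'` and `h(-∞) = h₀ - ∫_{(-∞,0]} h'`. Integrating the two
Gaussian bounds over a half-line with `∫₀^∞ exp(-η²/(4δ)) dη = √(πδ)` gives the estimates.
-/

open MeasureTheory Real Filter Set Topology

theorem integrable_exp_neg_sq_div {δ : ℝ} (hδ : 0 < δ) :
    Integrable fun t : ℝ => exp (-t ^ 2 / (4 * δ)) := by
  simpa only [neg_mul, ← div_eq_inv_mul, neg_div] using
    integrable_exp_neg_mul_sq (b := (4 * δ)⁻¹) (by positivity)

/-- For `δ ≤ 0` both sides are junk `0`: the integrand is not integrable and `√` of a negative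
number is `0`. -/
theorem integral_Ioi_exp_neg_sq_div (δ : ℝ) :
    ∫ t in Ioi (0 : ℝ), exp (-t ^ 2 / (4 * δ)) = √(π * δ) := by
  have h := integral_gaussian_Ioi (4 * δ)⁻¹
  simp only [neg_mul, ← div_eq_inv_mul, ← neg_div] at h
  rw [h, div_inv_eq_mul, show π * (4 * δ) = 2 ^ 2 * (π * δ) by ring,
    sqrt_mul (by norm_num), sqrt_sq (by norm_num)]
  ring

theorem integral_Iic_exp_neg_sq_div (δ : ℝ) :
    ∫ t in Iic (0 : ℝ), exp (-t ^ 2 / (4 * δ)) = √(π * δ) := by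
  rw [← integral_Ioi_exp_neg_sq_div δ, ← neg_zero, ← integral_comp_neg_Ioi, neg_zero]
  simp only [neg_sq]

section IntegrableDeriv

variable {E : Type*} [NormedAddCommGroup E] [NormedSpace ℝ E] [CompleteSpace E] {f : ℝ → E}

theorem tendsto_atTop_add_integral_Ioi_deriv (hf : Differentiable ℝ f)
    (hf' : Integrable (deriv f)) (a : ℝ) :
    Tendsto f atTop (𝓝 (f a + ∫ t in Ioi a, deriv f t)) := by
  refine (tendsto_const_nhds.add
    (intervalIntegral_tendsto_integral_Ioi a hf'.integrableOn tendsto_id)).congr fun x => ?_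
  rw [id, intervalIntegral.integral_eq_sub_of_hasDerivAt (fun t _ => (hf t).hasDerivAt)
    hf'.intervalIntegrable, add_sub_cancel]

theorem tendsto_atBot_sub_integral_Iic_deriv (hf : Differentiable ℝ f)
    (hf' : Integrable (deriv f)) (a : ℝ) :
    Tendsto f atBot (𝓝 (f a - ∫ t in Iic a, deriv f t)) := by
  refine (tendsto_const_nhds.sub
    (intervalIntegral_tendsto_integral_Iic a hf'.integrableOn tendsto_id)).congr fun x => ?_
  rw [id, intervalIntegral.integral_eq_sub_of_hasDerivAt (fun t _ => (hf t).hasDerivAt)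
    hf'.intervalIntegrable, sub_sub_cancel]

end IntegrableDeriv

theorem stmt_9_general (h : ℝ → ℝ) (δ₁ δ₂ H₀ h₀ : ℝ)
    (hδ₁ : 0 < δ₁) (hδ : δ₁ ≤ δ₂)
    (hdiff : Differentiable ℝ h) (hh0 : h 0 = h₀)
    (hder : ∀ ξ : ℝ,
      (H₀ / δ₁) * Real.exp (-ξ ^ 2 / (4 * δ₂)) ≤ deriv h ξ ∧
      deriv h ξ ≤ (H₀ / δ₂) * Real.exp (-ξ ^ 2 / (4 * δ₁))) :
    ∃ Lplus Lminus : ℝ,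
      Filter.Tendsto h Filter.atTop (nhds Lplus) ∧
      Filter.Tendsto h Filter.atBot (nhds Lminus) ∧
      h₀ + (H₀ / δ₁) * Real.sqrt (Real.pi * δ₂) ≤ Lplus ∧
      Lplus ≤ h₀ + (H₀ / δ₂) * Real.sqrt (Real.pi * δ₁) ∧
      h₀ - (H₀ / δ₂) * Real.sqrt (Real.pi * δ₁) ≤ Lminus ∧
      Lminus ≤ h₀ - (H₀ / δ₁) * Real.sqrt (Real.pi * δ₂) := by
  have hlower := (integrable_exp_neg_sq_div (hδ₁.trans_le hδ)).const_mul (H₀ / δ₁)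
  have hupper := (integrable_exp_neg_sq_div hδ₁).const_mul (H₀ / δ₂)
  have hint : Integrable (deriv h) :=
    integrable_of_le_of_le (measurable_deriv h).aestronglyMeasurable
      (ae_of_all _ fun ξ => (hder ξ).1) (ae_of_all _ fun ξ => (hder ξ).2) hlower hupper
  have bounds (s : Set ℝ) :
      (H₀ / δ₁) * ∫ t in s, exp (-t ^ 2 / (4 * δ₂)) ≤ ∫ t in s, deriv h t ∧
      ∫ t in s, deriv h t ≤ (H₀ / δ₂) * ∫ t in s, exp (-t ^ 2 / (4 * δ₁)) := by
    simp only [← integral_const_mul]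
    exact ⟨setIntegral_mono hlower.integrableOn hint.integrableOn fun ξ => (hder ξ).1,
      setIntegral_mono hint.integrableOn hupper.integrableOn fun ξ => (hder ξ).2⟩
  obtain ⟨hIoi₁, hIoi₂⟩ := bounds (Ioi 0)
  obtain ⟨hIic₁, hIic₂⟩ := bounds (Iic 0)
  simp only [integral_Ioi_exp_neg_sq_div, integral_Iic_exp_neg_sq_div] at hIoi₁ hIoi₂ hIic₁ hIic₂
  subst hh0
  exact ⟨_, _, tendsto_atTop_add_integral_Ioi_deriv hdiff hint 0,
    tendsto_atBot_sub_integral_Iic_deriv hdiff hint 0,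
    by linarith, by linarith, by linarith, by linarith⟩

theorem stmt_9 (h : ℝ → ℝ) (δ₁ δ₂ H₀ h₀ : ℝ)
    (hδ₁ : 0 < δ₁) (hδ : δ₁ ≤ δ₂) (hH₀ : H₀ < 0)
    (hdiff : Differentiable ℝ h) (hh0 : h 0 = h₀)
    (hder : ∀ ξ : ℝ,
      (H₀ / δ₁) * Real.exp (-ξ ^ 2 / (4 * δ₂)) ≤ deriv h ξ ∧
      deriv h ξ ≤ (H₀ / δ₂) * Real.exp (-ξ ^ 2 / (4 * δ₁))) :
    ∃ Lplus Lminus : ℝ,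
      Filter.Tendsto h Filter.atTop (nhds Lplus) ∧
      Filter.Tendsto h Filter.atBot (nhds Lminus) ∧
      h₀ + (H₀ / δ₁) * Real.sqrt (Real.pi * δ₂) ≤ Lplus ∧
      Lplus ≤ h₀ + (H₀ / δ₂) * Real.sqrt (Real.pi * δ₁) ∧
      h₀ - (H₀ / δ₂) * Real.sqrt (Real.pi * δ₁) ≤ Lminus ∧
      Lminus ≤ h₀ - (H₀ / δ₁) * Real.sqrt (Real.pi * δ₂) :=
  stmt_9_general h δ₁ δ₂ H₀ h₀ hδ₁ hδ hdiff hh0 hder
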